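/- Let Γ be a graph and v, w vertices of Γ. Then the images of v and w commute in the right-angled Artin group AΓ if and only if (v,w) ∈ Γ. Equivalently, for vertices g₁, g₂ of Γ, the following are equivalent: g₁ and g₂ are adjacent in Γ; g₁ and g₂ commute in AΓ; the generators [g₁] and [g₂] commute in AC(AΓ). -/

import Mathlib

/-- A (reflexive, symmetric) graph: a set of vertices with a reflexive
symmetric relation. -/
structure Gph : Type 1 where
  V : Type
  rel : V → V → Prop
  refl : ∀ v, rel v v
  symm : ∀ {v w}, rel v w → rel w v

/-- A homomorphism of graphs: a function on vertices preserving the relation. -/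
@[ext]
structure GphHom (Γ Δ : Gph) where
  toFun : Γ.V → Δ.V
  map_rel : ∀ {v w}, Γ.rel v w → Δ.rel (toFun v) (toFun w)

/-- The identity graph homomorphism. -/
def GphHom.id (Γ : Gph) : GphHom Γ Γ :=
  ⟨fun v => v, fun h => h⟩

/-- Composition of graph homomorphisms. -/
def GphHom.comp {Γ Δ Θ : Gph} (ψ : GphHom Δ Θ) (φ : GphHom Γ Δ) : GphHom Γ Θ :=
  ⟨fun v => ψ.toFun (φ.toFun v), fun h => ψ.map_rel (φ.map_rel h)⟩

/-- The commutator relators of the right-angled Artin group of `Γ`. -/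
def raagRels (Γ : Gph) : Set (FreeGroup Γ.V) :=
  { r | ∃ v w, Γ.rel v w ∧
      r = FreeGroup.of v * FreeGroup.of w * (FreeGroup.of v)⁻¹ * (FreeGroup.of w)⁻¹ }

/-- The right-angled Artin group of a graph `Γ`: generated by the vertices,
with commutation relations given by the edges. -/
abbrev Raag (Γ : Gph) : Type :=
  PresentedGroup (raagRels Γ)

/-- The image of a vertex `v` as a generator of the right-angled Artin group. -/
def Raag.of {Γ : Gph} (v : Γ.V) : Raag Γ :=
  PresentedGroup.of v

/-- Related vertices commute in the right-angled Artin group. -/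
theorem Raag.commute_of {Γ : Gph} {v w : Γ.V} (h : Γ.rel v w) :
    Commute (Raag.of v) (Raag.of w) := by
  have h1 : (PresentedGroup.mk (raagRels Γ))
      (FreeGroup.of v * FreeGroup.of w * (FreeGroup.of v)⁻¹ * (FreeGroup.of w)⁻¹) = 1 := by
    apply (QuotientGroup.eq_one_iff _).2
    exact Subgroup.subset_normalClosure ⟨v, w, h, rfl⟩
  rw [← commutatorElement_eq_one_iff_commute]
  simpa only [commutatorElement_def, map_mul, map_inv, Raag.of, PresentedGroup.of] using h1

/-- The universal property of the right-angled Artin group. -/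
def Raag.lift {Γ : Gph} {G : Type*} [Group G] (f : Γ.V → G)
    (hf : ∀ {v w}, Γ.rel v w → Commute (f v) (f w)) : Raag Γ →* G :=
  PresentedGroup.toGroup (f := f) (by
    rintro r ⟨v, w, hvw, rfl⟩
    have := commutatorElement_eq_one_iff_commute.2 (hf hvw)
    rw [commutatorElement_def] at this
    simpa only [map_mul, map_inv, FreeGroup.lift_apply_of] using this)

@[simp]
theorem Raag.lift_of {Γ : Gph} {G : Type*} [Group G] (f : Γ.V → G)
    (hf : ∀ {v w}, Γ.rel v w → Commute (f v) (f w)) (v : Γ.V) :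
    Raag.lift f hf (Raag.of v) = f v :=
  PresentedGroup.toGroup.of _

theorem Raag.hom_ext {Γ : Gph} {G : Type*} [Group G] {f g : Raag Γ →* G}
    (h : ∀ v, f (Raag.of v) = g (Raag.of v)) : f = g :=
  PresentedGroup.ext h

/-- The group homomorphism `Aφ` induced by a graph homomorphism `φ`. -/
def GphHom.map {Γ Δ : Gph} (φ : GphHom Γ Δ) : Raag Γ →* Raag Δ :=
  Raag.lift (fun v => Raag.of (φ.toFun v)) (fun h => Raag.commute_of (φ.map_rel h))

@[simp]
theorem GphHom.map_of {Γ Δ : Gph} (φ : GphHom Γ Δ) (v : Γ.V) :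
    φ.map (Raag.of v) = Raag.of (φ.toFun v) :=
  Raag.lift_of _ (fun h => Raag.commute_of (φ.map_rel h)) v

/-- The commutation graph of a group `G`: vertices are elements of `G`,
related exactly when they commute. -/
abbrev commGraph (G : Type) [Group G] : Gph where
  V := G
  rel g h := g * h = h * g
  refl _ := rfl
  symm h := h.symm

/-- `AC G`: the right-angled Artin group of the commutation graph of `G`. -/
abbrev AC (G : Type) [Group G] : Type :=
  Raag (commGraph G)

/-- `ACf : ACG →* ACH`, `[g] ↦ [f g]`, induced by a group homomorphism `f`. -/
def ACmap {G H : Type} [Group G] [Group H] (f : G →* H) : AC G →* AC H :=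
  GphHom.map (Γ := commGraph G) (Δ := commGraph H)
    ⟨f, fun {a b} h => show f a * f b = f b * f a by
      rw [← map_mul, show a * b = b * a from h, map_mul]⟩

@[simp]
theorem ACmap_of {G H : Type} [Group G] [Group H] (f : G →* H) (g : G) :
    ACmap f (Raag.of (Γ := commGraph G) g) = Raag.of (Γ := commGraph H) (f g) :=
  GphHom.map_of _ _

/-- The counit `ε_G : ACG →* G`, `[g] ↦ g`. -/
def ACcounit (G : Type) [Group G] : AC G →* G :=
  Raag.lift (Γ := commGraph G) (fun g => g) (fun h => h)

@[simp]
theorem ACcounit_of {G : Type} [Group G] (g : G) :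
    ACcounit G (Raag.of (Γ := commGraph G) g) = g :=
  Raag.lift_of (Γ := commGraph G) (fun g => g) (fun h => h) g

/-- The comultiplication `δ_G : ACG →* AC(ACG)`, `[g] ↦ [[g]]`. -/
def ACcomul (G : Type) [Group G] : AC G →* AC (AC G) :=
  Raag.lift (Γ := commGraph G)
    (fun g => Raag.of (Γ := commGraph (AC G)) (Raag.of (Γ := commGraph G) g))
    (fun h => Raag.commute_of (Raag.commute_of h))

@[simp]
theorem ACcomul_of {G : Type} [Group G] (g : G) :
    ACcomul G (Raag.of (Γ := commGraph G) g) =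
      Raag.of (Γ := commGraph (AC G)) (Raag.of (Γ := commGraph G) g) :=
  Raag.lift_of (Γ := commGraph G) _ (fun h => Raag.commute_of (Raag.commute_of h)) g

/-- The canonical `AC`-coalgebra structure map on a right-angled Artin group,
sending each vertex generator `v` to `[v]`. -/
def raagCoalgStr (Γ : Gph) : Raag Γ →* AC (Raag Γ) :=
  Raag.lift (fun v => Raag.of (Γ := commGraph (Raag Γ)) (Raag.of v))
    (fun h => Raag.commute_of (Raag.commute_of h))

@[simp]
theorem raagCoalgStr_of {Γ : Gph} (v : Γ.V) :
    raagCoalgStr Γ (Raag.of v) = Raag.of (Γ := commGraph (Raag Γ)) (Raag.of v) :=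
  Raag.lift_of _ (fun h => Raag.commute_of (Raag.commute_of h)) v

/-- An `AC`-coalgebra structure on a group `G` is a group homomorphism
`𝔤 : G →* ACG` satisfying the counit and coassociativity laws. -/
def IsACCoalgebra {G : Type} [Group G] (𝔤 : G →* AC G) : Prop :=
  (ACcounit G).comp 𝔤 = MonoidHom.id G ∧ (ACmap 𝔤).comp 𝔤 = (ACcomul G).comp 𝔤

/-- `f` is an `AC`-cohomomorphism from `(G, 𝔤)` to `(H, 𝔥)`. -/
def IsACCohom {G H : Type} [Group G] [Group H]
    (𝔤 : G →* AC G) (𝔥 : H →* AC H) (f : G →* H) : Prop :=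
  𝔥.comp f = (ACmap f).comp 𝔤

/-!
If `v` and `w` are not adjacent, then any two elements of any group are the images of `v`
and `w` under a homomorphism out of `AΓ`: send `v` and `w` to them and every other vertex
to `1`; each defining relation then involves `1` or a single generator twice, except the one
between `v` and `w`, which is absent. Taking two non-commuting transpositions in `S₃` shows
that `v` and `w` do not commute in `AΓ`. The third condition is the second one for the
commutation graph of `AΓ`, whose edges are exactly the commuting pairs.
-/

namespace Raag

variable {Γ : Gph}

theorem exists_hom_of_not_rel {v w : Γ.V} (hvw : ¬ Γ.rel v w) {G : Type*} [Group G]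
    (a b : G) : ∃ φ : Raag Γ →* G, φ (of v) = a ∧ φ (of w) = b := by
  classical
  have hne : v ≠ w := fun e => hvw (e ▸ Γ.refl v)
  let f : Γ.V → G := fun u => if u = v then a else if u = w then b else 1
  have hf : ∀ {x y}, Γ.rel x y → Commute (f x) (f y) := by
    intro x y hxy
    simp only [f]
    split_ifs <;> subst_vars <;> first
      | exact absurd hxy hvw
      | exact absurd (Γ.symm hxy) hvw
      | simp
  exact ⟨lift f hf, by simp [f], by simp [f, hne.symm]⟩

theorem rel_of_commute {v w : Γ.V} (h : Commute (of v) (of w)) : Γ.rel v w := by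
  by_contra hvw
  obtain ⟨φ, hv, hw⟩ :=
    exists_hom_of_not_rel hvw (Equiv.swap 0 1 : Equiv.Perm (Fin 3)) (Equiv.swap 1 2)
  have hφ := (h.map φ).eq
  rw [hv, hw] at hφ
  exact absurd hφ (by decide)

theorem commute_of_iff_rel {v w : Γ.V} : Commute (of v) (of w) ↔ Γ.rel v w :=
  ⟨rel_of_commute, commute_of⟩

end Raag

/-- For vertices `g₁, g₂` of `Γ`, the following are equivalent: `g₁` and `g₂`
are adjacent in `Γ`; their images commute in `AΓ`; the generators `[g₁]` and
`[g₂]` commute in `AC(AΓ)`. -/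
theorem raag_commute_tfae {Γ : Gph} (g₁ g₂ : Γ.V) :
    [Γ.rel g₁ g₂,
     Commute (Raag.of g₁) (Raag.of g₂),
     Commute (Raag.of (Γ := commGraph (Raag Γ)) (Raag.of g₁))
       (Raag.of (Γ := commGraph (Raag Γ)) (Raag.of g₂))].TFAE := by
  tfae_have 1 ↔ 2 := Raag.commute_of_iff_rel.symm
  tfae_have 2 ↔ 3 := (Raag.commute_of_iff_rel (Γ := commGraph (Raag Γ))).symm
  tfae_finish
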